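/- Quantitative no-go bound, pure target state (analytic core of Theorem 4.1): Let N ≥ 1 be a natural number, let ψ, φ be unit vectors in ℂ^d with |⟨ψ, φ⟩|² = 1 − 1/(4N), and let M be a Hermitian matrix on (ℂ^d)^{⊗N} with 0 ≤ M ≤ I in the Loewner order. Then (1 − Tr(M·(|φ⟩⟨φ|)^{⊗N})) + (1/(4·√N))·Tr(M·(|ψ⟩⟨ψ|)^{⊗N}) ≥ 1/(8·√N). -/

import Mathlib

open Matrix BigOperators
open scoped ComplexOrder

open Classical in
noncomputable def msqrt {n : Type*} [Fintype n] [DecidableEq n] (A : Matrix n n ℂ) :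
    Matrix n n ℂ :=
  if h : A.PosSemidef then
    (h.1.eigenvectorUnitary : Matrix n n ℂ) *
      diagonal ((↑) ∘ (√·) ∘ h.1.eigenvalues) * (star (h.1.eigenvectorUnitary : Matrix n n ℂ))
  else 0

noncomputable def traceNorm {n : Type*} [Fintype n] [DecidableEq n] (A : Matrix n n ℂ) : ℝ :=
  (msqrt (Aᴴ * A)).trace.re

noncomputable def fidelity {n : Type*} [Fintype n] [DecidableEq n] (ρ₀ ρ₁ : Matrix n n ℂ) : ℝ :=
  ((msqrt (msqrt ρ₀ * ρ₁ * msqrt ρ₀)).trace.re) ^ 2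

noncomputable def tensorPow {d : ℕ} (ρ : Matrix (Fin d) (Fin d) ℂ) (n : ℕ) :
    Matrix (Fin n → Fin d) (Fin n → Fin d) ℂ :=
  Matrix.of fun i j => ∏ k, ρ (i k) (j k)

/-!
Write `Φ = φ^{⊗N}`, `Ψ = ψ^{⊗N}`, `v = ⟨Φ, M Φ⟩` and `t = ⟨Ψ, M Ψ⟩`. Splitting
`⟨Ψ, Φ⟩ = ⟨Ψ, M Φ⟩ + ⟨Ψ, (1 - M) Φ⟩` and applying Cauchy–Schwarz to the positive forms `M` and
`1 - M` bounds the overlap by the Bhattacharyya coefficient `√(tv) + √((1-t)(1-v))` of the two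
outcome distributions. By Bernoulli the squared overlap `(1 - 1/(4N))^N` is at least `3/4`, which
forces `v - t ≤ 1/2`; so either the target is rejected with probability at least `1/2`, or `t` is
large enough to pay for the acceptance gap.
-/

open Matrix

section CauchySchwarz

variable {𝕜 : Type*} [RCLike 𝕜] {n : Type*} [Fintype n]

open RCLike

lemma norm_star_dotProduct_le (x y : n → 𝕜) :
    ‖star x ⬝ᵥ y‖ ≤ √(re (star x ⬝ᵥ x)) * √(re (star y ⬝ᵥ y)) := by
  have hinner (a b : n → 𝕜) : inner 𝕜 (WithLp.toLp 2 a) (WithLp.toLp 2 b) = star a ⬝ᵥ b := by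
    rw [EuclideanSpace.inner_toLp_toLp, dotProduct_comm]
  simpa only [norm_eq_sqrt_re_inner (𝕜 := 𝕜), hinner] using
    norm_inner_le_norm (𝕜 := 𝕜) (WithLp.toLp 2 x) (WithLp.toLp 2 y)

lemma Matrix.PosSemidef.norm_star_dotProduct_mulVec_le {M : Matrix n n 𝕜} (hM : M.PosSemidef)
    (x y : n → 𝕜) :
    ‖star x ⬝ᵥ M *ᵥ y‖ ≤ √(re (star x ⬝ᵥ M *ᵥ x)) * √(re (star y ⬝ᵥ M *ᵥ y)) := by
  classical
  obtain ⟨B, rfl⟩ := by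
    open scoped MatrixOrder in exact CStarAlgebra.nonneg_iff_eq_star_mul_self.mp hM.nonneg
  have hform (a b : n → 𝕜) : star a ⬝ᵥ (star B * B) *ᵥ b = star (B *ᵥ a) ⬝ᵥ B *ᵥ b := by
    rw [← mulVec_mulVec, dotProduct_mulVec, star_eq_conjTranspose, ← star_mulVec]
  simpa only [hform] using norm_star_dotProduct_le (B *ᵥ x) (B *ᵥ y)

end CauchySchwarz

lemma dotProduct_one_sub_mulVec {R n : Type*} [Ring R] [Fintype n] [DecidableEq n]
    (M : Matrix n n R) (x y : n → R) : x ⬝ᵥ (1 - M) *ᵥ y = x ⬝ᵥ y - x ⬝ᵥ M *ᵥ y := by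
  rw [sub_mulVec, one_mulVec, dotProduct_sub]

/-- The Bhattacharyya coefficient of the Bernoulli distributions with parameters `p` and `q`. -/
noncomputable def bhattacharyya (p q : ℝ) : ℝ :=
  √p * √q + √(1 - p) * √(1 - q)

lemma sq_sub_le_one_sub_sq_bhattacharyya {p q : ℝ} (hp₀ : 0 ≤ p) (hp₁ : p ≤ 1) (hq₀ : 0 ≤ q)
    (hq₁ : q ≤ 1) : (q - p) ^ 2 ≤ 1 - bhattacharyya p q ^ 2 := by
  obtain ⟨a, ha, rfl⟩ : ∃ a, 0 ≤ a ∧ a ^ 2 = p := ⟨√p, Real.sqrt_nonneg p, Real.sq_sqrt hp₀⟩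
  obtain ⟨b, hb, rfl⟩ : ∃ b, 0 ≤ b ∧ b ^ 2 = q := ⟨√q, Real.sqrt_nonneg q, Real.sq_sqrt hq₀⟩
  set c := √(1 - a ^ 2)
  set e := √(1 - b ^ 2)
  have hc : c ^ 2 = 1 - a ^ 2 := Real.sq_sqrt (by linarith)
  have he : e ^ 2 = 1 - b ^ 2 := Real.sq_sqrt (by linarith)
  -- Since `a² + c² = b² + e² = 1`, Lagrange's identity gives `1 - (ab + ce)² = (bc - ae)²`
  -- and `1 - (bc + ae)² = (ab - ce)²`.
  have hbhat : 1 - bhattacharyya (a ^ 2) (b ^ 2) ^ 2 = (b * c - a * e) ^ 2 := by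
    rw [bhattacharyya, Real.sqrt_sq ha, Real.sqrt_sq hb]
    linear_combination (-(b ^ 2 + e ^ 2)) * hc - he
  have hdiff : b ^ 2 - a ^ 2 = (b * c - a * e) * (b * c + a * e) := by
    linear_combination (-b ^ 2) * hc + a ^ 2 * he
  have hsum : (b * c + a * e) ^ 2 ≤ 1 := by
    nlinarith [sq_nonneg (a * b - c * e)]
  rw [hbhat, hdiff, mul_pow]
  exact mul_le_of_le_one_right (sq_nonneg _) hsum

section Effect

variable {𝕜 : Type*} [RCLike 𝕜] {n : Type*} [Fintype n] [DecidableEq n] {M : Matrix n n 𝕜}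
  {x y : n → 𝕜}

open RCLike

lemma re_dotProduct_one_sub_mulVec (hx : star x ⬝ᵥ x = 1) :
    re (star x ⬝ᵥ (1 - M) *ᵥ x) = 1 - re (star x ⬝ᵥ M *ᵥ x) := by
  rw [dotProduct_one_sub_mulVec, hx, map_sub, one_re]

lemma re_dotProduct_mulVec_le_one (hM : (1 - M).PosSemidef) (hx : star x ⬝ᵥ x = 1) :
    re (star x ⬝ᵥ M *ᵥ x) ≤ 1 := by
  have := hM.re_dotProduct_nonneg x
  rw [re_dotProduct_one_sub_mulVec hx] at this
  linarith

lemma norm_star_dotProduct_le_bhattacharyya (hM : M.PosSemidef) (hM' : (1 - M).PosSemidef)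
    (hx : star x ⬝ᵥ x = 1) (hy : star y ⬝ᵥ y = 1) :
    ‖star y ⬝ᵥ x‖ ≤ bhattacharyya (re (star y ⬝ᵥ M *ᵥ y)) (re (star x ⬝ᵥ M *ᵥ x)) := by
  have hsplit : star y ⬝ᵥ x = star y ⬝ᵥ M *ᵥ x + star y ⬝ᵥ (1 - M) *ᵥ x := by
    rw [dotProduct_one_sub_mulVec]
    ring
  calc ‖star y ⬝ᵥ x‖ ≤ ‖star y ⬝ᵥ M *ᵥ x‖ + ‖star y ⬝ᵥ (1 - M) *ᵥ x‖ :=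
        hsplit ▸ norm_add_le _ _
    _ ≤ _ := by
      rw [bhattacharyya, ← re_dotProduct_one_sub_mulVec hx,
        ← re_dotProduct_one_sub_mulVec hy]
      exact add_le_add (hM.norm_star_dotProduct_mulVec_le y x)
        (hM'.norm_star_dotProduct_mulVec_le y x)

end Effect

section TensorPower

variable {d N : ℕ}

def tensorPowVec (a : Fin d → ℂ) (N : ℕ) : (Fin N → Fin d) → ℂ :=
  fun i => ∏ k, a (i k)

lemma star_tensorPowVec (a : Fin d → ℂ) : star (tensorPowVec a N) = tensorPowVec (star a) N := by
  ext i
  simp [tensorPowVec]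

lemma tensorPowVec_dotProduct (a b : Fin d → ℂ) :
    tensorPowVec a N ⬝ᵥ tensorPowVec b N = (a ⬝ᵥ b) ^ N := by
  simp only [tensorPowVec, dotProduct, ← Finset.prod_mul_distrib]
  rw [Finset.sum_pow', Fintype.piFinset_univ]

lemma tensorPow_vecMulVec (a b : Fin d → ℂ) :
    tensorPow (vecMulVec a b) N = vecMulVec (tensorPowVec a N) (tensorPowVec b N) := by
  ext i j
  simp [tensorPow, tensorPowVec, vecMulVec_apply, Finset.prod_mul_distrib]

lemma trace_mul_tensorPow_vecMulVec_star (M : Matrix (Fin N → Fin d) (Fin N → Fin d) ℂ)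
    (a : Fin d → ℂ) :
    (M * tensorPow (vecMulVec a (star a)) N).trace
      = star (tensorPowVec a N) ⬝ᵥ M *ᵥ tensorPowVec a N := by
  rw [tensorPow_vecMulVec, ← star_tensorPowVec, mul_vecMulVec, trace_vecMulVec, dotProduct_comm]

end TensorPower

lemma three_div_four_le_one_sub_pow (N : ℕ) : 3 / 4 ≤ (1 - 1 / (4 * N) : ℝ) ^ N := by
  rcases Nat.eq_zero_or_pos N with rfl | hN
  · norm_num
  have hN' : (1 : ℝ) ≤ N := by exact_mod_cast hN
  have hbernoulli := one_add_mul_sub_le_pow (a := (1 - 1 / (4 * N) : ℝ))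
    (by linarith [div_le_one_of_le₀ (show (1 : ℝ) ≤ 4 * N by linarith) (by positivity)]) N
  have hmul : (N : ℝ) * (1 / (4 * N)) = 1 / 4 := by field_simp
  linarith

lemma div_two_le_one_sub_add_mul {c t v : ℝ} (hc₀ : 0 ≤ c) (hc₁ : c ≤ 1) (hv : v ≤ 1)
    (hvt : v - t ≤ 1 / 2) : c / 2 ≤ 1 - v + c * t := by
  nlinarith [mul_nonneg (sub_nonneg.2 hv) (sub_nonneg.2 hc₁),
    mul_nonneg hc₀ (show 0 ≤ t - v + 1 / 2 by linarith)]

/-- Quantitative no-go bound, pure target state. -/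
theorem no_go_pure {d N : ℕ} (hN : 1 ≤ N) (ψ φ : Fin d → ℂ)
    (hψ : star ψ ⬝ᵥ ψ = 1) (hφ : star φ ⬝ᵥ φ = 1)
    (hover : ‖star ψ ⬝ᵥ φ‖ ^ 2 = 1 - 1 / (4 * N))
    (M : Matrix (Fin N → Fin d) (Fin N → Fin d) ℂ)
    (hM : M.PosSemidef) (hM' : (1 - M).PosSemidef) :
    (1 - ((M * tensorPow (Matrix.vecMulVec φ (star φ)) N).trace).re) +
        (1 / (4 * Real.sqrt N)) *
          ((M * tensorPow (Matrix.vecMulVec ψ (star ψ)) N).trace).re ≥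
      1 / (8 * Real.sqrt N) := by
  rw [trace_mul_tensorPow_vecMulVec_star, trace_mul_tensorPow_vecMulVec_star]
  set Φ := tensorPowVec φ N
  set Ψ := tensorPowVec ψ N
  have hΦ : star Φ ⬝ᵥ Φ = 1 := by rw [star_tensorPowVec, tensorPowVec_dotProduct, hφ, one_pow]
  have hΨ : star Ψ ⬝ᵥ Ψ = 1 := by rw [star_tensorPowVec, tensorPowVec_dotProduct, hψ, one_pow]
  set v := (star Φ ⬝ᵥ M *ᵥ Φ).re
  set t := (star Ψ ⬝ᵥ M *ᵥ Ψ).re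
  have hv₁ : v ≤ 1 := re_dotProduct_mulVec_le_one hM' hΦ
  have hoverlap : 3 / 4 ≤ bhattacharyya t v ^ 2 :=
    calc 3 / 4 ≤ (1 - 1 / (4 * N) : ℝ) ^ N := three_div_four_le_one_sub_pow N
      _ = ‖star Ψ ⬝ᵥ Φ‖ ^ 2 := by
        rw [star_tensorPowVec, tensorPowVec_dotProduct, norm_pow, ← pow_mul, mul_comm N 2,
          pow_mul, hover]
      _ ≤ _ := pow_le_pow_left₀ (norm_nonneg _)
        (norm_star_dotProduct_le_bhattacharyya hM hM' hΦ hΨ) 2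
  have hdist : (v - t) ^ 2 ≤ 1 - bhattacharyya t v ^ 2 :=
    sq_sub_le_one_sub_sq_bhattacharyya (hM.re_dotProduct_nonneg Ψ)
      (re_dotProduct_mulVec_le_one hM' hΨ) (hM.re_dotProduct_nonneg Φ) hv₁
  have hvt : v - t ≤ 1 / 2 := by nlinarith
  have hsqrtN : 1 ≤ √(N : ℝ) := Real.one_le_sqrt.2 (by exact_mod_cast hN)
  rw [ge_iff_le, show 1 / (8 * √(N : ℝ)) = 1 / (4 * √(N : ℝ)) / 2 by ring]
  refine div_two_le_one_sub_add_mul (by positivity) ?_ hv₁ hvt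
  rw [div_le_one (by positivity)]
  linarith
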